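/- arXiv:0806.1015 — 3 statements merged into one kernel-verified Lean document; each statement's English description precedes it below -/
import Mathlib

section
/- Let k ≥ 4 and let L_k be the LOT group. The assignment sending every generator a_i to 1 ∈ ℤ determines a well-defined surjective group homomorphism q : L_k → ℤ, and the kernel of q is isomorphic to the free group of rank k. In particular L_k is free-by-cyclic and isomorphic to F_k ⋊ ℤ. -/
open Fin.NatCast in
/-- The `i`-th generator `a_i` of the LOT group `L_k`, as an element of the free group
on the `k+1` letters `a_0, …, a_k`. -/
def lotGen (k : ℕ) (i : ℕ) : FreeGroup (Fin (k + 1)) :=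
  FreeGroup.of ((i : ℕ) : Fin (k + 1))

/-- The relators of the LOT group `L_k`:
`a_{i+1} a_i a_{i+1}⁻¹ a_k⁻¹` for `i = 0, …, k-2`, together with
`a_0 a_k a_0⁻¹ a_{k-1}⁻¹`. -/
def lotRels (k : ℕ) : Set (FreeGroup (Fin (k + 1))) :=
  {r | ∃ i : ℕ, i ≤ k - 2 ∧
      r = lotGen k (i + 1) * lotGen k i * (lotGen k (i + 1))⁻¹ * (lotGen k k)⁻¹} ∪
  {lotGen k 0 * lotGen k k * (lotGen k 0)⁻¹ * (lotGen k (k - 1))⁻¹}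

/-- The LOT group `L_k`. -/
def LOT (k : ℕ) : Type := PresentedGroup (lotRels k)

instance (k : ℕ) : Group (LOT k) := by unfold LOT; infer_instance

/-- The image of the generator `a_i` in `L_k`. -/
def LOT.a (k : ℕ) (i : Fin (k + 1)) : LOT k := PresentedGroup.of i

/-!
Put `t = a_0` and `x_i = a_i a_0⁻¹`, so that `x_0 = 1` and `a_i = x_i t`. Since
`a_i a_j a_l⁻¹ = x_i (t x_j t⁻¹) (t x_l t⁻¹)⁻¹ t`, the relators of `L_k` say exactly that
conjugation `φ` by `t` satisfies `x_{i+1} φ(x_i) φ(x_{i+1})⁻¹ = x_k` for `i ≤ k - 2` and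
`φ(x_k) = x_{k-1}`. These equations define `φ(x_1), …, φ(x_k)` recursively as words in
`x_1, …, x_k`, and solving them backwards shows that the endomorphism of the free group `F_k` on
`x_1, …, x_k` so defined is an automorphism. Then `a_i ↦ x_i t` is an isomorphism
`L_k ≃ F_k ⋊_φ ⟨t⟩`, inverse to `x_i ↦ a_i a_0⁻¹`, `t ↦ a_0`; it turns `a_i ↦ 1` into the
projection onto `⟨t⟩ ≅ ℤ`, whose kernel is `F_k`.
-/

namespace SemidirectProduct

variable {N H : Type*} [Group N] [Group H] {φ : H →* MulAut N}

theorem mk_mul_mk_mul_inv_mk (a b c : N) (h : H) :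
    (⟨a, h⟩ * ⟨b, h⟩ * ⟨c, h⟩⁻¹ : N ⋊[φ] H) = ⟨a * φ h b * (φ h c)⁻¹, h⟩ := by
  ext
  · simp only [mul_left, inv_left, mul_right, map_mul, map_inv, MulAut.mul_apply,
      MulAut.apply_inv_self]
  · simp only [mul_right, inv_right, mul_inv_cancel_right]

noncomputable def kerRightHomComp {G : Type*} [Group G] (e : G ≃* N ⋊[φ] H) :
    (rightHom.comp (e : G →* N ⋊[φ] H)).ker ≃* N :=
  (MulEquiv.subgroupCongr (MonoidHom.ker_comp_mulEquiv _ _)).trans <|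
    (e.symm.subgroupMap _).symm.trans <|
      (MulEquiv.subgroupCongr range_inl_eq_ker_rightHom.symm).trans
        (MonoidHom.ofInjective inl_injective).symm

end SemidirectProduct

theorem MonoidHom.semiconj_zpow {F G : Type*} [Group F] [Group G] (f : F →* G)
    {α : MulAut F} {β : MulAut G} (h : Function.Semiconj f α β) (n : ℤ) :
    Function.Semiconj f ⇑(α ^ n) ⇑(β ^ n) := by
  induction n using Int.induction_on with
  | zero => exact fun _ => rfl
  | succ n ih =>
    intro w
    simp only [zpow_add_one, MulAut.mul_apply, h w, ih _]
  | pred n ih =>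
    have h_inv : Function.Semiconj f ⇑α⁻¹ ⇑β⁻¹ := fun w => by
      rw [MulAut.inv_apply, MulAut.inv_apply, MulEquiv.eq_symm_apply, ← h,
        MulEquiv.apply_symm_apply]
    intro w
    simp only [zpow_sub_one, MulAut.mul_apply, h_inv w, ih _]

namespace LOT

open SemidirectProduct

variable {k : ℕ}

-- `kerGen k i` is `x_i = a_i a_0⁻¹`, so `kerGen k 0 = 1`.
def kerGen (k : ℕ) : ℕ → FreeGroup (Fin k)
  | 0 => 1
  | i + 1 => if h : i < k then .of ⟨i, h⟩ else 1

@[simp]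
theorem kerGen_zero : kerGen k 0 = 1 := rfl

theorem kerGen_succ {i : ℕ} (hi : i < k) : kerGen k (i + 1) = .of ⟨i, hi⟩ := dif_pos hi

theorem kerGen_val_succ (j : Fin k) : kerGen k (j + 1) = .of j := kerGen_succ j.isLt

theorem kerGen_self (hk : 1 ≤ k) : kerGen k k = .of ⟨k - 1, by omega⟩ := by
  obtain ⟨m, rfl⟩ : ∃ m, k = m + 1 := ⟨k - 1, by omega⟩
  exact kerGen_succ _

theorem hom_ext_kerGen {G : Type*} [Group G] {f g : FreeGroup (Fin k) →* G}
    (h : ∀ i < k, f (kerGen k (i + 1)) = g (kerGen k (i + 1))) : f = g :=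
  FreeGroup.ext_hom f g fun j => by simpa only [kerGen_val_succ] using h j j.isLt

-- `φ(x_i)` for `i < k`.
def monodromyWord (k : ℕ) : ℕ → FreeGroup (Fin k)
  | 0 => 1
  | i + 1 => (kerGen k k)⁻¹ * kerGen k (i + 1) * monodromyWord k i

def monodromy (k : ℕ) : FreeGroup (Fin k) →* FreeGroup (Fin k) :=
  FreeGroup.lift fun j => if (j : ℕ) + 1 = k then kerGen k (k - 1) else monodromyWord k (j + 1)

-- `φ⁻¹(x_k)`: applying `φ⁻¹` to the relations gives `φ⁻¹(x_{i+1}) = φ⁻¹(x_k) x_{i+1} x_i⁻¹` for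
-- `i + 1 < k`, and for `i = k - 2` the left side is `x_k`.
def monodromyInvTop (k : ℕ) : FreeGroup (Fin k) :=
  kerGen k k * kerGen k (k - 2) * (kerGen k (k - 1))⁻¹

def monodromyInv (k : ℕ) : FreeGroup (Fin k) →* FreeGroup (Fin k) :=
  FreeGroup.lift fun j =>
    if (j : ℕ) + 1 = k then monodromyInvTop k
    else monodromyInvTop k * kerGen k (j + 1) * (kerGen k j)⁻¹

theorem monodromy_kerGen_top (hk : 1 ≤ k) : monodromy k (kerGen k k) = kerGen k (k - 1) := by
  rw [kerGen_self hk, monodromy, FreeGroup.lift_apply_of, if_pos (by simp; omega)]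

theorem monodromy_kerGen_of_lt {i : ℕ} (hi : i < k) :
    monodromy k (kerGen k i) = monodromyWord k i := by
  cases i with
  | zero => rfl
  | succ i =>
    rw [kerGen_succ (by omega), monodromy, FreeGroup.lift_apply_of, if_neg (by simp; omega)]

theorem monodromy_kerGen_succ {i : ℕ} (hi : i + 1 < k) :
    monodromy k (kerGen k (i + 1)) =
      (kerGen k k)⁻¹ * kerGen k (i + 1) * monodromy k (kerGen k i) := by
  rw [monodromy_kerGen_of_lt hi, monodromy_kerGen_of_lt (by omega), monodromyWord]

theorem monodromyInv_kerGen_top (hk : 1 ≤ k) :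
    monodromyInv k (kerGen k k) = monodromyInvTop k := by
  conv_lhs => rw [kerGen_self hk, monodromyInv, FreeGroup.lift_apply_of, if_pos (by simp; omega)]

theorem monodromyInv_kerGen_succ {i : ℕ} (hi : i + 1 < k) :
    monodromyInv k (kerGen k (i + 1)) =
      monodromyInvTop k * kerGen k (i + 1) * (kerGen k i)⁻¹ := by
  conv_lhs =>
    rw [kerGen_succ (by omega), monodromyInv, FreeGroup.lift_apply_of, if_neg (by simp; omega)]

theorem monodromyInv_monodromy_kerGen_of_lt (hk : 1 ≤ k) {i : ℕ} (hi : i < k) :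
    monodromyInv k (monodromy k (kerGen k i)) = kerGen k i := by
  induction i with
  | zero => simp
  | succ i ih =>
    rw [monodromy_kerGen_succ hi, map_mul, map_mul, map_inv, ih (by omega),
      monodromyInv_kerGen_top hk, monodromyInv_kerGen_succ hi]
    group

theorem monodromy_monodromyInvTop (hk : 2 ≤ k) : monodromy k (monodromyInvTop k) = kerGen k k := by
  have h := monodromy_kerGen_succ (k := k) (i := k - 2) (by omega)
  rw [show k - 2 + 1 = k - 1 by omega] at h
  rw [monodromyInvTop, map_mul, map_mul, map_inv, h, monodromy_kerGen_top (by omega)]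
  group

theorem monodromyInv_comp_monodromy (hk : 2 ≤ k) :
    (monodromyInv k).comp (monodromy k) = .id _ := by
  refine hom_ext_kerGen fun i hi => ?_
  rcases (by omega : i + 1 < k ∨ i + 1 = k) with hi | hi
  · exact monodromyInv_monodromy_kerGen_of_lt (by omega) hi
  · simp only [MonoidHom.comp_apply, MonoidHom.id_apply, hi]
    rw [monodromy_kerGen_top (by omega), show k - 1 = k - 2 + 1 by omega,
      monodromyInv_kerGen_succ (by omega), show k - 2 + 1 = k - 1 by omega, monodromyInvTop]
    group

theorem monodromy_comp_monodromyInv (hk : 2 ≤ k) :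
    (monodromy k).comp (monodromyInv k) = .id _ := by
  refine hom_ext_kerGen fun i hi => ?_
  rcases (by omega : i + 1 < k ∨ i + 1 = k) with hi | hi
  · rw [MonoidHom.comp_apply, monodromyInv_kerGen_succ hi, map_mul, map_mul, map_inv,
      monodromy_monodromyInvTop hk, monodromy_kerGen_succ hi, MonoidHom.id_apply]
    group
  · rw [MonoidHom.comp_apply, hi, monodromyInv_kerGen_top (by omega),
      monodromy_monodromyInvTop hk, MonoidHom.id_apply]

def monodromyEquiv (k : ℕ) (hk : 2 ≤ k) : MulAut (FreeGroup (Fin k)) :=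
  (monodromy k).toMulEquiv (monodromyInv k) (monodromyInv_comp_monodromy hk)
    (monodromy_comp_monodromyInv hk)


open Fin.NatCast in
def gen (k m : ℕ) : LOT k := LOT.a k m

theorem gen_succ_mul_gen_mul_inv {i : ℕ} (hi : i ≤ k - 2) :
    gen k (i + 1) * gen k i * (gen k (i + 1))⁻¹ = gen k k := by
  have h := PresentedGroup.one_of_mem (rels := lotRels k) (Or.inl ⟨i, hi, rfl⟩)
  rwa [map_mul, map_inv, mul_inv_eq_one] at h

theorem gen_zero_mul_gen_mul_inv : gen k 0 * gen k k * (gen k 0)⁻¹ = gen k (k - 1) := by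
  have h := PresentedGroup.one_of_mem (rels := lotRels k) (Or.inr rfl)
  rwa [map_mul, map_inv, mul_inv_eq_one] at h

def kerHom (k : ℕ) : FreeGroup (Fin k) →* LOT k :=
  FreeGroup.lift fun j => gen k (j + 1) * (gen k 0)⁻¹

theorem kerHom_kerGen {i : ℕ} (hi : i ≤ k) : kerHom k (kerGen k i) = gen k i * (gen k 0)⁻¹ := by
  cases i with
  | zero => simp
  | succ i => rw [kerGen_succ (by omega), kerHom, FreeGroup.lift_apply_of]

theorem kerHom_monodromy_kerGen_of_lt {i : ℕ} (hi : i < k) :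
    kerHom k (monodromy k (kerGen k i)) = gen k 0 * kerHom k (kerGen k i) * (gen k 0)⁻¹ := by
  induction i with
  | zero => simp
  | succ i ih =>
    rw [monodromy_kerGen_succ hi, map_mul, map_mul, map_inv, ih (by omega), kerHom_kerGen le_rfl,
      kerHom_kerGen (by omega), kerHom_kerGen (by omega),
      ← gen_succ_mul_gen_mul_inv (i := i) (by omega)]
    group

theorem kerHom_semiconj (hk : 2 ≤ k) :
    Function.Semiconj (kerHom k) (monodromyEquiv k hk) (MulAut.conj (gen k 0)) := by
  suffices h : (kerHom k).comp (monodromy k) =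
      (MulAut.conj (gen k 0)).toMonoidHom.comp (kerHom k) from DFunLike.congr_fun h
  refine hom_ext_kerGen fun i hi => ?_
  rcases (by omega : i + 1 < k ∨ i + 1 = k) with hi | hi
  · exact kerHom_monodromy_kerGen_of_lt hi
  · simp only [MonoidHom.comp_apply, MulEquiv.coe_toMonoidHom, MulAut.conj_apply, hi]
    rw [monodromy_kerGen_top (by omega), kerHom_kerGen (by omega), kerHom_kerGen le_rfl,
      ← gen_zero_mul_gen_mul_inv]
    group


def monodromyAction (k : ℕ) (hk : 2 ≤ k) : Multiplicative ℤ →* MulAut (FreeGroup (Fin k)) :=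
  zpowersHom _ (monodromyEquiv k hk)

theorem monodromyAction_ofAdd_one (hk : 2 ≤ k) :
    ⇑(monodromyAction k hk (.ofAdd 1)) = monodromy k := by
  rw [monodromyAction, zpowersHom_apply, toAdd_ofAdd, zpow_one]
  rfl

def toSemidirect (k : ℕ) (hk : 2 ≤ k) :
    LOT k →* FreeGroup (Fin k) ⋊[monodromyAction k hk] Multiplicative ℤ :=
  PresentedGroup.toGroup (f := fun i => ⟨kerGen k i, .ofAdd 1⟩) <| by
    have lift_lotGen {m : ℕ} (hm : m ≤ k) :
        FreeGroup.lift (fun i : Fin (k + 1) =>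
          (⟨kerGen k i, .ofAdd 1⟩ : FreeGroup (Fin k) ⋊[monodromyAction k hk] Multiplicative ℤ))
          (lotGen k m) = ⟨kerGen k m, .ofAdd 1⟩ := by
      rw [lotGen, FreeGroup.lift_apply_of, Fin.val_cast_of_lt (by omega)]
    rintro r (⟨i, hi, rfl⟩ | rfl) <;>
      rw [map_mul, map_inv, mul_inv_eq_one, map_mul, map_mul, map_inv, lift_lotGen (by omega),
        lift_lotGen (by omega), lift_lotGen (by omega), mk_mul_mk_mul_inv_mk] <;>
      congr 1 <;> rw [monodromyAction_ofAdd_one]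
    · rw [monodromy_kerGen_succ (by omega)]
      group
    · rw [monodromy_kerGen_top (by omega), kerGen_zero, map_one]
      group

theorem toSemidirect_a (hk : 2 ≤ k) (i : Fin (k + 1)) :
    toSemidirect k hk (LOT.a k i) = ⟨kerGen k i, .ofAdd 1⟩ :=
  PresentedGroup.toGroup.of _

theorem toSemidirect_gen (hk : 2 ≤ k) {m : ℕ} (hm : m ≤ k) :
    toSemidirect k hk (gen k m) = ⟨kerGen k m, .ofAdd 1⟩ := by
  rw [gen, toSemidirect_a, Fin.val_cast_of_lt (by omega)]

def ofSemidirect (k : ℕ) (hk : 2 ≤ k) :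
    FreeGroup (Fin k) ⋊[monodromyAction k hk] Multiplicative ℤ →* LOT k :=
  lift (kerHom k) (zpowersHom _ (gen k 0)) fun n => MonoidHom.ext fun w => by
    simpa [monodromyAction, map_zpow] using (kerHom k).semiconj_zpow (kerHom_semiconj hk) n.toAdd w

theorem ofSemidirect_mk (hk : 2 ≤ k) (w : FreeGroup (Fin k)) :
    ofSemidirect k hk ⟨w, .ofAdd 1⟩ = kerHom k w * gen k 0 := by
  rw [mk_eq_inl_mul_inr, map_mul, ofSemidirect, lift_inl, lift_inr, zpowersHom_apply, toAdd_ofAdd,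
    zpow_one]

theorem ofSemidirect_comp_toSemidirect (hk : 2 ≤ k) :
    (ofSemidirect k hk).comp (toSemidirect k hk) = .id _ := by
  refine PresentedGroup.ext fun i => ?_
  change ofSemidirect k hk (toSemidirect k hk (LOT.a k i)) = LOT.a k i
  rw [toSemidirect_a, ofSemidirect_mk, kerHom_kerGen (by omega), inv_mul_cancel_right, gen,
    Fin.cast_val_eq_self]

theorem toSemidirect_comp_ofSemidirect (hk : 2 ≤ k) :
    (toSemidirect k hk).comp (ofSemidirect k hk) = .id _ := by
  have h_gen_zero : toSemidirect k hk (gen k 0) = inr (.ofAdd 1) := by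
    rw [toSemidirect_gen hk (by omega), kerGen_zero]
    rfl
  apply hom_ext
  · refine hom_ext_kerGen fun i hi => ?_
    rw [MonoidHom.comp_apply, MonoidHom.comp_apply, ofSemidirect, lift_inl,
      kerHom_kerGen (by omega), map_mul, map_inv, toSemidirect_gen hk (by omega), h_gen_zero,
      mk_eq_inl_mul_inr, mul_inv_cancel_right, MonoidHom.comp_apply, MonoidHom.id_apply]
  · refine MonoidHom.ext_mint ?_
    rw [MonoidHom.comp_apply, MonoidHom.comp_apply, ofSemidirect, lift_inr, zpowersHom_apply,
      toAdd_ofAdd, zpow_one, h_gen_zero, MonoidHom.comp_apply, MonoidHom.id_apply]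

def mulEquivSemidirect (k : ℕ) (hk : 2 ≤ k) :
    LOT k ≃* FreeGroup (Fin k) ⋊[monodromyAction k hk] Multiplicative ℤ :=
  (toSemidirect k hk).toMulEquiv (ofSemidirect k hk) (ofSemidirect_comp_toSemidirect hk)
    (toSemidirect_comp_ofSemidirect hk)

end LOT

/-- For `k ≥ 4`, sending every generator `a_i` of `L_k` to `1 ∈ ℤ` gives a
well-defined surjective group homomorphism `q : L_k → ℤ` whose kernel is free of rank `k`;
in particular `L_k` is free-by-cyclic and isomorphic to `F_k ⋊ ℤ`. -/
theorem LOT_free_by_cyclic (k : ℕ) (hk : 4 ≤ k) :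
    ∃ q : LOT k →* Multiplicative ℤ,
      (∀ i : Fin (k + 1), q (LOT.a k i) = Multiplicative.ofAdd 1) ∧
      Function.Surjective q ∧
      Nonempty (q.ker ≃* FreeGroup (Fin k)) ∧
      ∃ φ : Multiplicative ℤ →* MulAut (FreeGroup (Fin k)),
        Nonempty (LOT k ≃* FreeGroup (Fin k) ⋊[φ] Multiplicative ℤ) := by
  have hk2 : 2 ≤ k := by omega
  let e := LOT.mulEquivSemidirect k hk2
  refine ⟨SemidirectProduct.rightHom.comp e.toMonoidHom, fun i => ?_,
    SemidirectProduct.rightHom_surjective.comp e.surjective,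
    ⟨SemidirectProduct.kerRightHomComp e⟩, _, ⟨e⟩⟩
  exact congrArg SemidirectProduct.right (LOT.toSemidirect_a hk2 i)
end

section
/- The sixteen unordered pairs listed as edges of the link graph Λ are pairwise distinct (so the link has no bigons), and the simple graph Λ contains no cycle of length 3. Hence the link of the vertex of X_{L_{(a_i)}} is large: it has no circuits of combinatorial length less than 4, and the squared presentation complex X_{L_{(a_i)}} is non-positively curved. -/
/-- Vertices of the link graph of `X_{L_{(a_i)}}`: a pair `(i, ε)` stands for `a_i⁺`
when `ε = true` and for `a_i⁻` when `ε = false`. -/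
abbrev LinkV : Type := Fin 5 × Bool

/-- `a_i⁺`. -/
def ap (i : Fin 5) : LinkV := (i, true)

/-- `a_i⁻`. -/
def am (i : Fin 5) : LinkV := (i, false)

/-- The sixteen edges of the link graph `Λ` of the vertex of `X_{L_{(a_i)}}`:
the outer circuit edges, the bridge edges, and the suspension edges. -/
def linkEdges : List (Sym2 LinkV) :=
  [ s(ap 1, am 0), s(ap 1, ap 2), s(ap 2, ap 3), s(ap 3, am 0),
    s(ap 0, ap 1), s(ap 2, am 1), s(ap 3, am 2), s(am 0, am 3),
    s(ap 4, ap 0), s(ap 4, am 1), s(ap 4, am 2), s(ap 4, am 3),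
    s(am 4, ap 0), s(am 4, am 1), s(am 4, am 2), s(am 4, am 3) ]

/-- The link graph `Λ`. -/
def linkGraph : SimpleGraph LinkV :=
  SimpleGraph.fromEdgeSet {e | e ∈ linkEdges}

lemma linkGraph_adj {v w : LinkV} (h : linkGraph.Adj v w) : s(v, w) ∈ linkEdges := by
  rw [linkGraph, SimpleGraph.fromEdgeSet_adj] at h
  exact h.1

lemma no_triangle : ∀ a b c : LinkV,
    ¬(s(a, b) ∈ linkEdges ∧ s(b, c) ∈ linkEdges ∧ s(c, a) ∈ linkEdges) := by
  decide

/-- The sixteen unordered pairs listed as edges of `Λ` are pairwise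
distinct (no bigons), and `Λ` contains no cycle of length 3.  Hence the link of the
vertex of `X_{L_{(a_i)}}` is large: it has no circuits of combinatorial length less
than 4. -/
theorem link_is_large :
    linkEdges.Nodup ∧
    (∀ (v : LinkV) (w : linkGraph.Walk v v), w.IsCycle → w.length ≠ 3) ∧
    (∀ (v : LinkV) (w : linkGraph.Walk v v), w.IsCycle → 4 ≤ w.length) := by
  have nodup : linkEdges.Nodup := by decide
  have no3 : ∀ (v : LinkV) (w : linkGraph.Walk v v), w.IsCycle → w.length ≠ 3 := by
    intro v w _ hl
    cases w with
    | nil => simp at hl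
    | cons h1 p =>
      cases p with
      | nil => simp at hl
      | cons h2 q =>
        cases q with
        | nil => simp at hl
        | cons h3 r =>
          cases r with
          | nil =>
            exact no_triangle _ _ _ ⟨linkGraph_adj h1, linkGraph_adj h2, linkGraph_adj h3⟩
          | cons h4 s => simp [SimpleGraph.Walk.length_cons] at hl
  refine ⟨nodup, no3, fun v w hc => ?_⟩
  have h3 := hc.three_le_length
  have := no3 v w hc
  omega
end

section
/- In the link graph Λ of X_{L_{(a_i)}}, each of the four bridge edges {a_0⁺,a_1⁺}, {a_2⁺,a_1⁻}, {a_3⁺,a_2⁻}, {a_0⁻,a_3⁻} lies in no cycle of length 4; equivalently, every circuit of Λ containing a bridge edge has length at least 5. Hence every bridge edge is a poison corner, and since every 2-cell of X_{L_{(a_i)}} contains a bridge corner, no flat plane can be tiled by the 2-cells of X_{L_{(a_i)}}. -/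
/-- The four bridge edges of `Λ`. -/
def bridgeEdges : List (Sym2 LinkV) :=
  [ s(ap 0, ap 1), s(ap 2, am 1), s(ap 3, am 2), s(am 0, am 3) ]

def linkPairs : List (LinkV × LinkV) :=
  [ (ap 1, am 0), (ap 1, ap 2), (ap 2, ap 3), (ap 3, am 0),
    (ap 0, ap 1), (ap 2, am 1), (ap 3, am 2), (am 0, am 3),
    (ap 4, ap 0), (ap 4, am 1), (ap 4, am 2), (ap 4, am 3),
    (am 4, ap 0), (am 4, am 1), (am 4, am 2), (am 4, am 3) ]
def bridgePairs : List (LinkV × LinkV) :=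
  [ (ap 0, ap 1), (ap 2, am 1), (ap 3, am 2), (am 0, am 3) ]
def adjB (x y : LinkV) : Bool := (x,y) ∈ linkPairs || (y,x) ∈ linkPairs
def brB (x y : LinkV) : Bool := (x,y) ∈ bridgePairs || (y,x) ∈ bridgePairs

lemma mem_link_iff : ∀ x y : LinkV, s(x,y) ∈ linkEdges ↔ adjB x y = true := by decide
lemma mem_bridge_iff : ∀ x y : LinkV, s(x,y) ∈ bridgeEdges ↔ brB x y = true := by decide

lemma no3 : ∀ v a b : LinkV, adjB v a = true → adjB a b = true → adjB b v = true →
    brB v a = false ∧ brB a b = false ∧ brB b v = false := by decide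

lemma no4 : ∀ v a b c : LinkV, adjB v a = true → adjB a b = true → adjB b c = true →
    adjB c v = true → v ≠ b → a ≠ c →
    brB v a = false ∧ brB a b = false ∧ brB b c = false ∧ brB c v = false := by decide

lemma adjB_of_adj {x y : LinkV} (h : linkGraph.Adj x y) : adjB x y = true := by
  rw [linkGraph, SimpleGraph.fromEdgeSet_adj] at h
  exact (mem_link_iff x y).mp h.1

/-- In the link graph `Λ` of `X_{L_{(a_i)}}`, each of the four bridge
edges lies in no cycle of length 4; equivalently, every circuit of `Λ` containing a
bridge edge has length at least 5.  Hence every bridge edge is a poison corner. -/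
theorem bridge_edges_are_poison_corners :
    ∀ e ∈ bridgeEdges, ∀ (v : LinkV) (w : linkGraph.Walk v v),
      w.IsCycle → e ∈ w.edges → w.length ≠ 4 ∧ 5 ≤ w.length := by
  intro e he v w hc hew
  have h3 := hc.three_le_length
  have hne3 : w.length ≠ 3 := by
    intro hl
    cases w with
    | nil => simp at hl
    | cons h1 p =>
      cases p with
      | nil => simp at hl
      | cons h2 q =>
        cases q with
        | nil => simp at hl
        | cons h3' r =>
          cases r with
          | cons h4 s => simp only [SimpleGraph.Walk.length_cons] at hl; omega
          | nil =>
            simp only [SimpleGraph.Walk.edges_cons, SimpleGraph.Walk.edges_nil,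
              List.mem_cons, List.not_mem_nil, or_false] at hew
            obtain ⟨n1, n2, n3⟩ := no3 _ _ _ (adjB_of_adj h1) (adjB_of_adj h2) (adjB_of_adj h3')
            rcases hew with rfl | rfl | rfl
            · rw [mem_bridge_iff] at he; rw [he] at n1; exact absurd n1 (by simp)
            · rw [mem_bridge_iff] at he; rw [he] at n2; exact absurd n2 (by simp)
            · rw [mem_bridge_iff] at he; rw [he] at n3; exact absurd n3 (by simp)
  have hne4 : w.length ≠ 4 := by
    intro hl
    cases w with
    | nil => simp at hl
    | cons h1 p =>
      cases p with
      | nil => simp at hl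
      | cons h2 q =>
        cases q with
        | nil => simp at hl
        | cons h3' r =>
          cases r with
          | nil => simp at hl
          | cons h4 s =>
            cases s with
            | cons h5 t => simp only [SimpleGraph.Walk.length_cons] at hl; omega
            | nil =>
              rename_i a b c
              have hnd := hc.2
              have hvb : v ≠ b := by rintro rfl; simp at hnd
              have hac : a ≠ c := by rintro rfl; simp at hnd
              simp only [SimpleGraph.Walk.edges_cons, SimpleGraph.Walk.edges_nil,
                List.mem_cons, List.not_mem_nil, or_false] at hew
              obtain ⟨n1, n2, n3, n4⟩ := no4 _ _ _ _ (adjB_of_adj h1) (adjB_of_adj h2)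
                (adjB_of_adj h3') (adjB_of_adj h4) hvb hac
              rcases hew with rfl | rfl | rfl | rfl
              · rw [mem_bridge_iff] at he; rw [he] at n1; exact absurd n1 (by simp)
              · rw [mem_bridge_iff] at he; rw [he] at n2; exact absurd n2 (by simp)
              · rw [mem_bridge_iff] at he; rw [he] at n3; exact absurd n3 (by simp)
              · rw [mem_bridge_iff] at he; rw [he] at n4; exact absurd n4 (by simp)
  exact ⟨hne4, by omega⟩
end
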